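/- arXiv:1907.06149 — 3 statements merged into one kernel-verified Lean document; each statement's English description precedes it below -/
import Mathlib

section
/- Let M be a left S-semimodule, N a subtractive S-subsemimodule of M, and suppose M = L ⊕ K (internal direct sum) with L ≤ N and K ≤ M. Then N = L ⊕ (K ∩ N), i.e., N is the internal direct sum of L and K ∩ N. -/
/-- `L` is a subtractive subsemimodule of `M`. -/
def Subtractive {S : Type*} [Semiring S] {M : Type*} [AddCommMonoid M] [Module S M]
    (L : Submodule S M) : Prop :=
  ∀ m : M, ∀ l ∈ L, ∀ l' ∈ L, m + l = l' → m ∈ L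

/-!
Write `n ∈ N` as `ℓ + k` in `M = L ⊕ K`. Since `ℓ ∈ L ≤ N` and `N` is subtractive, `k ∈ N`, so
the decomposition already lives in `L ⊕ (K ∩ N)`; it is unique there because any decomposition
in `L ⊕ (K ∩ N)` is one in `L ⊕ K`.
-/

section

variable {S : Type*} [Semiring S] {M : Type*} [AddCommMonoid M] [Module S M]

theorem Subtractive.mem_of_add_mem {N : Submodule S M} (hN : Subtractive N) {l k : M}
    (hl : l ∈ N) (hlk : l + k ∈ N) : k ∈ N :=
  hN k l hl (l + k) hlk (add_comm k l)

theorem existsUnique_add_inf_of_existsUnique_add {L K N : Submodule S M} {m : M}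
    (h : ∃! p : L × K, m = (p.1 : M) + (p.2 : M))
    (hmem : ∀ p : L × K, m = (p.1 : M) + (p.2 : M) → (p.2 : M) ∈ N) :
    ∃! p : L × (K ⊓ N : Submodule S M), m = (p.1 : M) + (p.2 : M) := by
  obtain ⟨⟨l, k⟩, hlk, huniq⟩ := h
  refine ⟨(l, ⟨k, k.2, hmem (l, k) hlk⟩), hlk, ?_⟩
  rintro ⟨l', k'⟩ hlk'
  have hsame : (l', Submodule.inclusion inf_le_left k') = (l, k) := huniq _ hlk'
  ext
  · exact congrArg (fun p : L × K => (p.1 : M)) hsame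
  · exact congrArg (fun p : L × K => (p.2 : M)) hsame

end

/-- If `N ≤ M` is subtractive and `M = L ⊕ K` with `L ≤ N`, then
`N = L ⊕ (K ∩ N)` (internal direct sum: every `n ∈ N` is uniquely `ℓ + k` with
`ℓ ∈ L` and `k ∈ K ⊓ N`). -/
theorem stmt_2 (S : Type*) [Semiring S] (M : Type*) [AddCommMonoid M] [Module S M]
    (N L K : Submodule S M) (hN : Subtractive N) (hLN : L ≤ N)
    (hds : ∀ m : M, ∃! p : L × K, m = (p.1 : M) + (p.2 : M)) :
    ∀ n ∈ N, ∃! p : L × (K ⊓ N : Submodule S M), n = (p.1 : M) + (p.2 : M) := by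
  intro n hn
  refine existsUnique_add_inf_of_existsUnique_add (hds n) fun p hp => ?_
  exact hN.mem_of_add_mem (hLN p.1.2) (hp ▸ hn)
end

section
/- The left ideal N₊₁ = { [[a,c],[b,d]] ∈ M₂(ℝ⁺) : a ≤ c and b ≤ d } of the semiring M₂(ℝ⁺) is not subtractive. -/
/-- The 2×2 matrix semiring over the nonnegative reals. -/
abbrev M2 : Type := Matrix (Fin 2) (Fin 2) NNReal

/-- A subset of a semiring is a left ideal. -/
def IsLeftIdeal (I : Set M2) : Prop :=
  0 ∈ I ∧ (∀ x ∈ I, ∀ y ∈ I, x + y ∈ I) ∧ ∀ s : M2, ∀ x ∈ I, s * x ∈ I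

/-- A subset is subtractive: `s + x = y` with `x, y ∈ I` implies `s ∈ I`. -/
def IsSubtractive (I : Set M2) : Prop :=
  ∀ s x y : M2, x ∈ I → y ∈ I → s + x = y → s ∈ I

/-- `N₊₁ = { [[a,c],[b,d]] : a ≤ c, b ≤ d }`. -/
def Nge1 : Set M2 := {A | A 0 0 ≤ A 0 1 ∧ A 1 0 ≤ A 1 1}

/-! Left multiplication by a matrix with nonnegative entries preserves the entrywise domination
of one column by another, so `N₊₁` is a left ideal. It is not subtractive:
`E₁₁ + [[0,1],[0,1]] = [[1,1],[0,1]]` with the second summand and the sum in `N₊₁`,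
but `E₁₁ ∉ N₊₁`. -/

theorem Matrix.mul_apply_le_mul_apply_of_col_le {l m n R : Type*} [Fintype m] [Semiring R]
    [PartialOrder R] [CanonicallyOrderedAdd R] [IsOrderedRing R]
    (B : Matrix l m R) {A : Matrix m n R} {j j' : n} (hA : ∀ k, A k j ≤ A k j') (i : l) :
    (B * A) i j ≤ (B * A) i j' := by
  simp only [Matrix.mul_apply]
  exact Finset.sum_le_sum fun k _ => mul_le_mul_of_nonneg_left (hA k) zero_le

theorem mem_Nge1_iff {A : M2} : A ∈ Nge1 ↔ ∀ i, A i 0 ≤ A i 1 := by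
  rw [Fin.forall_fin_two]; rfl

theorem isLeftIdeal_Nge1 : IsLeftIdeal Nge1 :=
  ⟨⟨le_rfl, le_rfl⟩, fun _ hx _ hy => ⟨add_le_add hx.1 hy.1, add_le_add hx.2 hy.2⟩,
    fun s _ hx => mem_Nge1_iff.2 (s.mul_apply_le_mul_apply_of_col_le (mem_Nge1_iff.1 hx))⟩

theorem not_isSubtractive_Nge1 : ¬ IsSubtractive Nge1 := by
  intro h
  have hx : !![0, 1; 0, 1] ∈ Nge1 := by simp [Nge1]
  have hsx : !![1, 0; 0, 0] + !![0, 1; 0, 1] ∈ Nge1 := by simp [Nge1]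
  have hs : !![1, 0; 0, 0] ∉ Nge1 := by simp [Nge1]
  exact hs (h _ _ _ hx hsx rfl)

/-- `N₊₁` is a left ideal of `M₂(ℝ⁺)` which is not subtractive. -/
theorem stmt_4 : IsLeftIdeal Nge1 ∧ ¬ IsSubtractive Nge1 :=
  ⟨isLeftIdeal_Nge1, not_isSubtractive_Nge1⟩
end

section
/- A left S-semimodule M satisfies the ascending chain condition on direct summands if and only if M satisfies the descending chain condition on direct summands. -/
/-- `N` is a direct summand of `M`: there is `N'` with `M = N ⊕ N'`, i.e. every element
of `M` is uniquely a sum of an element of `N` and an element of `N'`. -/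
def IsDirectSummand {S : Type*} [Semiring S] {M : Type*} [AddCommMonoid M] [Module S M]
    (N : Submodule S M) : Prop :=
  ∃ N' : Submodule S M, ∀ m : M, ∃! p : N × N', m = (p.1 : M) + (p.2 : M)

namespace Stmt15

variable {S : Type*} [Semiring S] {M : Type*} [AddCommMonoid M] [Module S M]

/-- `C` is a complement of `N` in `M`. -/
def Compl (N C : Submodule S M) : Prop :=
  ∀ m : M, ∃! p : N × C, m = (p.1 : M) + (p.2 : M)

lemma isDirectSummand_iff {N : Submodule S M} : IsDirectSummand N ↔ ∃ C, Compl N C :=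
  Iff.rfl

lemma Compl.symm {N C : Submodule S M} (h : Compl N C) : Compl C N := by
  intro m
  obtain ⟨p, hp, hu⟩ := h m
  refine ⟨(p.2, p.1), ?_, ?_⟩
  · show m = (p.2 : M) + (p.1 : M)
    rw [add_comm]; exact hp
  · rintro ⟨b, a⟩ hba
    have hba' : m = (a : M) + (b : M) := by
      rw [add_comm]; exact hba
    have hh := hu (a, b) hba'
    rw [← hh]

noncomputable def pN {N C : Submodule S M} (h : Compl N C) (m : M) : M :=
  ((h m).choose.1 : M)

noncomputable def pC {N C : Submodule S M} (h : Compl N C) (m : M) : M :=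
  ((h m).choose.2 : M)

lemma pN_mem {N C : Submodule S M} (h : Compl N C) (m : M) : pN h m ∈ N :=
  ((h m).choose.1).2

lemma pC_mem {N C : Submodule S M} (h : Compl N C) (m : M) : pC h m ∈ C :=
  ((h m).choose.2).2

lemma decomp {N C : Submodule S M} (h : Compl N C) (m : M) : m = pN h m + pC h m :=
  (h m).choose_spec.1

lemma eq_proj {N C : Submodule S M} (h : Compl N C) {m a b : M}
    (ha : a ∈ N) (hb : b ∈ C) (hm : m = a + b) : pN h m = a ∧ pC h m = b := by
  have hh := (h m).choose_spec.2 (⟨a, ha⟩, ⟨b, hb⟩) hm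
  constructor
  · exact (congrArg (fun z => (z.1 : M)) hh).symm
  · exact (congrArg (fun z => (z.2 : M)) hh).symm

lemma uniq {N C : Submodule S M} (h : Compl N C) {a b a' b' : M}
    (ha : a ∈ N) (hb : b ∈ C) (ha' : a' ∈ N) (hb' : b' ∈ C)
    (heq : a + b = a' + b') : a = a' ∧ b = b' := by
  have h1 := eq_proj h ha hb rfl
  have h2 := eq_proj h ha' hb' heq
  exact ⟨h1.1.symm.trans h2.1, h1.2.symm.trans h2.2⟩

lemma proj_add {N C : Submodule S M} (h : Compl N C) (m₁ m₂ : M) :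
    pN h (m₁ + m₂) = pN h m₁ + pN h m₂ ∧ pC h (m₁ + m₂) = pC h m₁ + pC h m₂ :=
  eq_proj h (add_mem (pN_mem h m₁) (pN_mem h m₂)) (add_mem (pC_mem h m₁) (pC_mem h m₂))
    (by rw [add_add_add_comm, ← decomp h m₁, ← decomp h m₂])

lemma proj_smul {N C : Submodule S M} (h : Compl N C) (s : S) (m : M) :
    pN h (s • m) = s • pN h m ∧ pC h (s • m) = s • pC h m :=
  eq_proj h (Submodule.smul_mem _ s (pN_mem h m)) (Submodule.smul_mem _ s (pC_mem h m))
    (by rw [← smul_add, ← decomp h m])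

lemma proj_of_mem_left {N C : Submodule S M} (h : Compl N C) {m : M} (hm : m ∈ N) :
    pN h m = m ∧ pC h m = 0 :=
  eq_proj h hm (zero_mem C) (add_zero m).symm

lemma proj_of_mem_right {N C : Submodule S M} (h : Compl N C) {m : M} (hm : m ∈ C) :
    pN h m = 0 ∧ pC h m = m :=
  eq_proj h (zero_mem N) hm (zero_add m).symm

lemma mem_of_pC_eq_zero {N C : Submodule S M} (h : Compl N C) {m : M}
    (hm : pC h m = 0) : m ∈ N := by
  have := decomp h m
  rw [hm, add_zero] at this
  rw [this]; exact pN_mem h m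

/-- the projection onto `C` as a linear map -/
noncomputable def pCLin {N C : Submodule S M} (h : Compl N C) : M →ₗ[S] M where
  toFun := pC h
  map_add' m₁ m₂ := (proj_add h m₁ m₂).2
  map_smul' s m := (proj_smul h s m).2

/-- Lemma A: if `N₁ ≤ N₂` are summands and `C₂` is a complement of `N₂`, then `N₁`
has a complement containing `C₂`. -/
lemma complA {N₁ N₂ C₂ C₁ : Submodule S M} (h12 : N₁ ≤ N₂)
    (h2 : Compl N₂ C₂) (h1 : Compl N₁ C₁) :
    ∃ C, C₂ ≤ C ∧ Compl N₁ C := by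
  refine ⟨C₂ ⊔ (N₂ ⊓ C₁), le_sup_left, ?_⟩
  intro m
  set p := pN h2 m with hp
  set q := pC h2 m with hq
  -- c (p) ∈ N₂ ⊓ C₁
  have hcp_C₁ : pC h1 p ∈ C₁ := pC_mem h1 p
  have hcp_N₂ : pC h1 p ∈ N₂ := by
    apply mem_of_pC_eq_zero h2
    have hadd := (proj_add h2 (pN h1 p) (pC h1 p)).2
    rw [← decomp h1 p] at hadd
    rw [(proj_of_mem_left h2 (pN_mem h2 m)).2] at hadd
    rw [(proj_of_mem_left h2 (h12 (pN_mem h1 p))).2, zero_add] at hadd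
    exact hadd.symm
  have hmem : pC h1 p + q ∈ C₂ ⊔ (N₂ ⊓ C₁) :=
    add_mem (Submodule.mem_sup_right (⟨hcp_N₂, hcp_C₁⟩ : pC h1 p ∈ N₂ ⊓ C₁))
      (Submodule.mem_sup_left (pC_mem h2 m))
  refine ⟨(⟨pN h1 p, pN_mem h1 p⟩, ⟨pC h1 p + q, hmem⟩), ?_, ?_⟩
  · show m = pN h1 p + (pC h1 p + q)
    rw [← add_assoc, ← decomp h1 p]
    exact decomp h2 m
  · rintro ⟨⟨a, haN⟩, ⟨u, huC⟩⟩ hmu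
    simp only at hmu
    -- u = y + z with y ∈ C₂, z ∈ N₂ ⊓ C₁
    obtain ⟨y, hy, z, hz, hyz⟩ := Submodule.mem_sup.mp huC
    have hm2 : m = (a + z) + y := by rw [hmu, ← hyz]; abel
    have h2u := uniq h2 (add_mem (h12 haN) hz.1) hy (pN_mem h2 m) (pC_mem h2 m)
      (hm2.symm.trans (decomp h2 m))
    -- a + z = p, y = q
    have h1u := uniq h1 haN hz.2 (pN_mem h1 p) (pC_mem h1 p)
      (h2u.1.trans (decomp h1 p))
    -- a = pN h1 p, z = pC h1 p
    have : u = pC h1 p + q := by rw [← hyz, h1u.2, h2u.2, add_comm]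
    simp only [Prod.mk.injEq, Subtype.mk.injEq]
    exact ⟨h1u.1, this⟩

/-- Lemma B: if `N₁ ≤ N₂` are summands and `C₁` is a complement of `N₁`, then `N₂`
has a complement contained in `C₁`. -/
lemma complB {N₁ N₂ C₁ C₂ : Submodule S M} (h12 : N₁ ≤ N₂)
    (h1 : Compl N₁ C₁) (h2 : Compl N₂ C₂) :
    ∃ C, C ≤ C₁ ∧ Compl N₂ C := by
  refine ⟨Submodule.map (pCLin h1) C₂, ?_, ?_⟩
  · rintro y ⟨x, _, rfl⟩
    exact pC_mem h1 x
  · -- key fact: pC h2 (pC h1 x) = x for x ∈ C₂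
    have key : ∀ x : M, x ∈ C₂ → pC h2 (pC h1 x) = x := by
      intro x hx
      have hadd := (proj_add h2 (pN h1 x) (pC h1 x)).2
      rw [← decomp h1 x] at hadd
      rw [(proj_of_mem_left h2 (h12 (pN_mem h1 x))).2, zero_add] at hadd
      rw [(proj_of_mem_right h2 hx).2] at hadd
      exact hadd.symm
    intro m
    set p := pN h2 m with hp
    set q := pC h2 m with hq
    have hmemN : p + pN h1 q ∈ N₂ := add_mem (pN_mem h2 m) (h12 (pN_mem h1 q))
    have hmemC : pC h1 q ∈ Submodule.map (pCLin h1) C₂ := ⟨q, pC_mem h2 m, rfl⟩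
    refine ⟨(⟨p + pN h1 q, hmemN⟩, ⟨pC h1 q, hmemC⟩), ?_, ?_⟩
    · show m = (p + pN h1 q) + pC h1 q
      rw [add_assoc, ← decomp h1 q]
      exact decomp h2 m
    · rintro ⟨⟨n, hnN⟩, ⟨y, hyC⟩⟩ hny
      simp only at hny
      obtain ⟨x, hxC₂, hxy⟩ := hyC
      have hxy' : pC h1 x = y := hxy
      -- first: x = q
      have hQ : pC h2 m = pC h2 n + pC h2 y := by
        rw [hny]; exact (proj_add h2 n y).2
      rw [(proj_of_mem_left h2 hnN).2, zero_add, ← hxy', key x hxC₂] at hQ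
      -- hQ : q = x
      have hx_eq : x = q := hQ.symm
      have hy_eq : y = pC h1 q := by rw [← hxy', hx_eq]
      -- now cancel: n + x = (p + pN h1 q) + x in N₂ ⊕ C₂
      have hsum : n + q = (p + pN h1 q) + q := by
        have e1 : n + q = m + pN h1 q := by
          rw [hny, hy_eq]
          conv_lhs => rw [decomp h1 q]
          abel
        have e2 : m + pN h1 q = (p + pN h1 q) + q := by
          conv_lhs => rw [decomp h2 m]
          abel
        rw [e1, e2]
      have := uniq h2 hnN (pC_mem h2 m) hmemN (pC_mem h2 m) hsum
      simp only [Prod.mk.injEq, Subtype.mk.injEq]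
      exact ⟨this.1, Subtype.ext hy_eq⟩

/-- Lemma C: two nested summands with the same complement coincide. -/
lemma complEq {N₁ N₂ C : Submodule S M} (h12 : N₁ ≤ N₂)
    (h1 : Compl N₁ C) (h2 : Compl N₂ C) : N₁ = N₂ := by
  refine le_antisymm h12 ?_
  intro n hn
  have := uniq h2 hn (zero_mem C) (h12 (pN_mem h1 n)) (pC_mem h1 n)
    (by rw [add_zero]; exact decomp h1 n)
  have hn1 : n = pN h1 n := by
    conv_lhs => rw [decomp h1 n]
    rw [← this.2, add_zero]
  rw [hn1]; exact pN_mem h1 n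

/-- From an antitone chain of summands, build a monotone chain of complements. -/
lemma chainA {f : ℕ → Submodule S M} (hs : ∀ n, IsDirectSummand (f n)) (ha : Antitone f) :
    ∃ g : ℕ → Submodule S M, (∀ n, Compl (f n) (g n)) ∧ Monotone g := by
  let step : ∀ k, {C // Compl (f k) C} → {C // Compl (f (k + 1)) C} := fun k ih =>
    ⟨(complA (ha k.le_succ) ih.2 (hs (k + 1)).choose_spec).choose,
      (complA (ha k.le_succ) ih.2 (hs (k + 1)).choose_spec).choose_spec.2⟩
  let G : ∀ n, {C // Compl (f n) C} := fun n =>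
    Nat.rec ⟨(hs 0).choose, (hs 0).choose_spec⟩ step n
  refine ⟨fun n => (G n).1, fun n => (G n).2, monotone_nat_of_le_succ ?_⟩
  intro n
  exact (complA (ha n.le_succ) (G n).2 (hs (n + 1)).choose_spec).choose_spec.1

/-- From a monotone chain of summands, build an antitone chain of complements. -/
lemma chainB {f : ℕ → Submodule S M} (hs : ∀ n, IsDirectSummand (f n)) (hm : Monotone f) :
    ∃ g : ℕ → Submodule S M, (∀ n, Compl (f n) (g n)) ∧ Antitone g := by
  let step : ∀ k, {C // Compl (f k) C} → {C // Compl (f (k + 1)) C} := fun k ih =>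
    ⟨(complB (hm k.le_succ) ih.2 (hs (k + 1)).choose_spec).choose,
      (complB (hm k.le_succ) ih.2 (hs (k + 1)).choose_spec).choose_spec.2⟩
  let G : ∀ n, {C // Compl (f n) C} := fun n =>
    Nat.rec ⟨(hs 0).choose, (hs 0).choose_spec⟩ step n
  refine ⟨fun n => (G n).1, fun n => (G n).2, antitone_nat_of_succ_le ?_⟩
  intro n
  exact (complB (hm n.le_succ) (G n).2 (hs (n + 1)).choose_spec).choose_spec.1

end Stmt15

open Stmt15 in
/-- a left `S`-semimodule `M` satisfies the ACC on direct summands iff it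
satisfies the DCC on direct summands. -/
theorem stmt_15 (S : Type*) [Semiring S] (M : Type*) [AddCommMonoid M] [Module S M] :
    (∀ f : ℕ → Submodule S M, (∀ n, IsDirectSummand (f n)) → Monotone f →
      ∃ n, ∀ m, n ≤ m → f m = f n) ↔
    (∀ f : ℕ → Submodule S M, (∀ n, IsDirectSummand (f n)) → Antitone f →
      ∃ n, ∀ m, n ≤ m → f m = f n) := by
  constructor
  · intro hacc f hf hanti
    obtain ⟨g, hg, hmono⟩ := chainA hf hanti
    obtain ⟨n, hn⟩ := hacc g (fun k => ⟨f k, (hg k).symm⟩) hmono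
    refine ⟨n, fun m hm => ?_⟩
    exact complEq (hanti hm) (by rw [← hn m hm]; exact hg m) (hg n)
  · intro hdcc f hf hmono
    obtain ⟨g, hg, hanti⟩ := chainB hf hmono
    obtain ⟨n, hn⟩ := hdcc g (fun k => ⟨f k, (hg k).symm⟩) hanti
    refine ⟨n, fun m hm => ?_⟩
    exact (complEq (hmono hm) (hg n) (by rw [← hn m hm]; exact hg m)).symm
end
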